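/- arXiv:2409.03382 — 4 statements merged into one kernel-verified Lean document; each statement's English description precedes it below -/
import Mathlib

section
/- Let S_n(x) be binomial(n,x) with 0 < x < 1 and λ = nx. Then E[(S_n(x)-nx)/(S_n(x)+1)] = -((1-x)/((n+1)x))·(1 - (λ+1)·P(S_n(x)=0)). -/
/-!
Writing `(k - n x) / (k + 1) = 1 - (n x + 1) / (k + 1)` reduces the claim to the inverse moment
`E[1 / (S_n + 1)] = (1 - (1 - x) ^ (n + 1)) / ((n + 1) x)`. That moment follows from the absorption
identity `(n + 1) * choose n k = (k + 1) * choose (n + 1) (k + 1)`, which turns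
`(n + 1) x * P(S_n = k) / (k + 1)` into `P(S_{n+1} = k + 1)`; summing over `k` leaves
`1 - P(S_{n+1} = 0)`.
-/

open Finset

theorem sum_choose_mul_pow_mul_one_sub_pow {R : Type*} [CommRing R] (n : ℕ) (x : R) :
    ∑ k ∈ range (n + 1), (n.choose k : R) * x ^ k * (1 - x) ^ (n - k) = 1 := by
  simpa [add_sub_cancel, one_pow, mul_comm, mul_assoc, mul_left_comm] using
    (add_pow x (1 - x) n).symm

theorem succ_mul_sum_choose_mul_pow_mul_one_sub_pow_div_succ {K : Type*} [Field K] [CharZero K]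
    (n : ℕ) (x : K) :
    ((n : K) + 1) * x *
        ∑ k ∈ range (n + 1), (n.choose k : K) * x ^ k * (1 - x) ^ (n - k) / (k + 1)
      = 1 - (1 - x) ^ (n + 1) := by
  have absorb : ∀ k ∈ range (n + 1),
      ((n : K) + 1) * x * ((n.choose k : K) * x ^ k * (1 - x) ^ (n - k) / (k + 1))
        = ((n + 1).choose (k + 1) : K) * x ^ (k + 1) * (1 - x) ^ (n + 1 - (k + 1)) := by
    intro k _
    have hchoose : ((n : K) + 1) * n.choose k = (n + 1).choose (k + 1) * ((k : K) + 1) := by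
      exact_mod_cast Nat.add_one_mul_choose_eq n k
    rw [Nat.add_sub_add_right]
    field_simp
    linear_combination x ^ (k + 1) * (1 - x) ^ (n - k) * hchoose
  have total := sum_choose_mul_pow_mul_one_sub_pow (n + 1) x
  rw [sum_range_succ'] at total
  simp only [Nat.choose_zero_right, Nat.cast_one, pow_zero, Nat.sub_zero, one_mul] at total
  rw [mul_sum, sum_congr rfl absorb]
  linear_combination total

theorem binomial_centered_inv_moment_general (n : ℕ) (x : ℝ) (hx0 : 0 < x) :
    ∑ k ∈ Finset.range (n + 1),
        (((k : ℝ) - n * x) / ((k : ℝ) + 1)) *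
          ((n.choose k : ℝ) * x ^ k * (1 - x) ^ (n - k))
      = -((1 - x) / (((n : ℝ) + 1) * x)) * (1 - ((n : ℝ) * x + 1) * (1 - x) ^ n) := by
  have split : ∀ k ∈ range (n + 1),
      ((k : ℝ) - n * x) / (k + 1) * ((n.choose k : ℝ) * x ^ k * (1 - x) ^ (n - k))
        = (n.choose k : ℝ) * x ^ k * (1 - x) ^ (n - k)
          - (n * x + 1) * ((n.choose k : ℝ) * x ^ k * (1 - x) ^ (n - k) / (k + 1)) := by
    intro k _
    field_simp
    ring
  have inv_moment := succ_mul_sum_choose_mul_pow_mul_one_sub_pow_div_succ n x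
  rw [sum_congr rfl split, sum_sub_distrib, ← mul_sum, sum_choose_mul_pow_mul_one_sub_pow]
  have hnx : ((n : ℝ) + 1) * x ≠ 0 := by positivity
  field_simp
  linear_combination -(n * x + 1) * inv_moment

/-- For S_n(x) binomial(n,x), 0 < x < 1, λ = nx:
E[(S_n(x)-nx)/(S_n(x)+1)] = -((1-x)/((n+1)x))·(1 - (λ+1)P(S_n(x)=0)). -/
theorem binomial_centered_inv_moment (n : ℕ) (x : ℝ) (hx0 : 0 < x) (hx1 : x < 1) :
    ∑ k ∈ Finset.range (n + 1),
        (((k : ℝ) - n * x) / ((k : ℝ) + 1)) *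
          ((n.choose k : ℝ) * x ^ k * (1 - x) ^ (n - k))
      = -((1 - x) / (((n : ℝ) + 1) * x)) * (1 - ((n : ℝ) * x + 1) * (1 - x) ^ n) :=
  binomial_centered_inv_moment_general n x hx0
end

section
/- Let S_n(x) be binomial(n,x) with 0 < x < 1 and λ = nx. Then E[(S_n(x)-nx)_+/(S_n(x)+1)] = ((1-x)/((n+1)x))·(λ·P(S_n(x)=⌈λ⌉) - P(S_n(x) ≥ ⌈λ⌉+1)), where y_+ = max(y,0) and ⌈λ⌉ is the ceiling of λ. -/
/-!
Write `w k = C(n,k) xᵏ (1-x)ⁿ⁻ᵏ`. The recurrence `(k+1)(1-x) w (k+1) = (n-k) x w k` gives, for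
every `k`, the identity `(k - nx)/(k+1) · w k = c · (nx · w k - (nx+1) · w (k+1))` with
`c = (1-x)/((n+1)x)`. Since `(k - nx)₊` vanishes below `⌈nx⌉` and equals `k - nx` from there on,
summing this identity over `⌈nx⌉ ≤ k ≤ n` telescopes (`w (n+1) = 0`) to the right-hand side.
-/

open Finset

def binomialWeight {R : Type*} [CommRing R] (n : ℕ) (x : R) (k : ℕ) : R :=
  n.choose k * x ^ k * (1 - x) ^ (n - k)

section CommRing

variable {R : Type*} [CommRing R]

lemma binomialWeight_eq_zero_of_lt {n k : ℕ} (x : R) (h : n < k) : binomialWeight n x k = 0 := by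
  simp [binomialWeight, Nat.choose_eq_zero_of_lt h]

lemma succ_mul_one_sub_mul_binomialWeight_succ (n k : ℕ) (x : R) :
    ((k : R) + 1) * (1 - x) * binomialWeight n x (k + 1)
      = ((n - k : ℕ) : R) * x * binomialWeight n x k := by
  rcases lt_or_ge k n with hkn | hnk
  · have hchoose : ((n.choose (k + 1) * (k + 1) : ℕ) : R) = ((n.choose k * (n - k) : ℕ) : R) := by
      rw [Nat.choose_succ_right_eq]
    have hpow : (1 - x) ^ (n - k) = (1 - x) ^ (n - (k + 1)) * (1 - x) := by
      rw [← pow_succ]; congr 1; omega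
    push_cast at hchoose
    rw [binomialWeight, binomialWeight, hpow]
    linear_combination x ^ (k + 1) * (1 - x) ^ (n - (k + 1)) * (1 - x) * hchoose
  · rw [binomialWeight_eq_zero_of_lt x (Nat.lt_succ_of_le hnk), Nat.sub_eq_zero_of_le hnk]
    simp

end CommRing

section Field

variable {K : Type*} [Field K] [CharZero K]

lemma sub_div_succ_mul_binomialWeight (n k : ℕ) {x : K} (hx : x ≠ 0) :
    ((k : K) - n * x) / (k + 1) * binomialWeight n x k
      = (1 - x) / ((n + 1) * x)
          * (n * x * binomialWeight n x k - (n * x + 1) * binomialWeight n x (k + 1)) := by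
  rcases le_or_gt k n with hkn | hnk
  · have hrec := succ_mul_one_sub_mul_binomialWeight_succ n k x
    rw [Nat.cast_sub hkn] at hrec
    have hk : (k : K) + 1 ≠ 0 := by norm_cast
    have hn : (n : K) + 1 ≠ 0 := by norm_cast
    field_simp
    linear_combination ((n : K) * x + 1) * hrec
  · simp [binomialWeight_eq_zero_of_lt x hnk,
      binomialWeight_eq_zero_of_lt x (hnk.trans k.lt_succ_self)]

lemma sum_Icc_sub_div_succ_mul_binomialWeight (m n : ℕ) {x : K} (hx : x ≠ 0) :
    ∑ k ∈ Icc m n, ((k : K) - n * x) / (k + 1) * binomialWeight n x k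
      = (1 - x) / ((n + 1) * x)
          * (n * x * binomialWeight n x m - ∑ k ∈ Icc (m + 1) n, binomialWeight n x k) := by
  rcases lt_or_ge n m with hnm | hmn
  · simp [binomialWeight_eq_zero_of_lt x hnm, hnm, hnm.trans m.lt_succ_self]
  have htelescope : ∑ k ∈ Icc m n, (binomialWeight n x (k + 1) - binomialWeight n x k)
      = -binomialWeight n x m := by
    rw [sum_Icc_sub hmn, binomialWeight_eq_zero_of_lt x n.lt_succ_self, zero_sub]
  have hsplit : ∑ k ∈ Icc m n, binomialWeight n x k
      = binomialWeight n x m + ∑ k ∈ Icc (m + 1) n, binomialWeight n x k := by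
    rw [Icc_add_one_left_eq_Ioc, add_sum_Ioc_eq_sum_Icc hmn]
  rw [sum_congr rfl fun k _ => sub_div_succ_mul_binomialWeight n k hx, ← mul_sum,
    sum_sub_distrib, ← mul_sum, ← mul_sum]
  rw [sum_sub_distrib] at htelescope
  linear_combination (1 - x) / ((n + 1) * x) * (-(n * x + 1) * htelescope - hsplit)

end Field

lemma sum_range_max_sub_eq_sum_Icc_ceil (n : ℕ) (a : ℝ) (f : ℝ → ℕ → ℝ)
    (hf : ∀ k, f 0 k = 0) :
    ∑ k ∈ range (n + 1), f (max ((k : ℝ) - a) 0) k = ∑ k ∈ Icc ⌈a⌉₊ n, f ((k : ℝ) - a) k := by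
  have hfilter : (range (n + 1)).filter (fun k => ⌈a⌉₊ ≤ k) = Icc ⌈a⌉₊ n := by
    ext k; simp only [mem_filter, mem_range, mem_Icc]; omega
  rw [← hfilter, sum_filter]
  refine sum_congr rfl fun k _ => ?_
  split_ifs with hk
  · rw [max_eq_left (sub_nonneg.mpr (Nat.ceil_le.mp hk))]
  · rw [max_eq_right (sub_nonpos.mpr (Nat.lt_ceil.mp (not_le.mp hk)).le), hf]

theorem binomial_positive_part_inv_moment_general (n : ℕ) (x : ℝ) (hx0 : 0 < x) :
    ∑ k ∈ Finset.range (n + 1),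
        (max ((k : ℝ) - n * x) 0 / ((k : ℝ) + 1)) *
          ((n.choose k : ℝ) * x ^ k * (1 - x) ^ (n - k))
      = ((1 - x) / (((n : ℝ) + 1) * x)) *
          ((n : ℝ) * x *
              ((n.choose ⌈(n : ℝ) * x⌉₊ : ℝ) * x ^ ⌈(n : ℝ) * x⌉₊
                * (1 - x) ^ (n - ⌈(n : ℝ) * x⌉₊))
            - ∑ k ∈ Finset.Icc (⌈(n : ℝ) * x⌉₊ + 1) n,
                (n.choose k : ℝ) * x ^ k * (1 - x) ^ (n - k)) := by
  calc _ = ∑ k ∈ Icc ⌈(n : ℝ) * x⌉₊ n, ((k : ℝ) - n * x) / (k + 1) * binomialWeight n x k :=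
        sum_range_max_sub_eq_sum_Icc_ceil n _ (fun y k => y / (k + 1) * binomialWeight n x k)
          (by simp)
    _ = _ := sum_Icc_sub_div_succ_mul_binomialWeight _ n hx0.ne'

/-- For S_n(x) binomial(n,x), 0 < x < 1, λ = nx:
E[(S_n(x)-nx)₊/(S_n(x)+1)]
  = ((1-x)/((n+1)x))·(λ·P(S_n(x)=⌈λ⌉) - P(S_n(x) ≥ ⌈λ⌉+1)). -/
theorem binomial_positive_part_inv_moment (n : ℕ) (x : ℝ) (hx0 : 0 < x) (hx1 : x < 1) :
    ∑ k ∈ Finset.range (n + 1),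
        (max ((k : ℝ) - n * x) 0 / ((k : ℝ) + 1)) *
          ((n.choose k : ℝ) * x ^ k * (1 - x) ^ (n - k))
      = ((1 - x) / (((n : ℝ) + 1) * x)) *
          ((n : ℝ) * x *
              ((n.choose ⌈(n : ℝ) * x⌉₊ : ℝ) * x ^ ⌈(n : ℝ) * x⌉₊
                * (1 - x) ^ (n - ⌈(n : ℝ) * x⌉₊))
            - ∑ k ∈ Finset.Icc (⌈(n : ℝ) * x⌉₊ + 1) n,
                (n.choose k : ℝ) * x ^ k * (1 - x) ^ (n - k)) :=
  binomial_positive_part_inv_moment_general n x hx0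
end

section
/- For m = 1,…,n-1, the probability that a binomial(n, m/n) random variable equals m satisfies P(S_n(m/n)=m) = C(n,m)(m/n)^m(1-m/n)^{n-m} ≤ (1/√(2π))·√(n/(m(n-m))). -/
/-!
Stirling's approximation with explicit error terms: for `n ≥ 1`,
`e^{1/(12n+6)} σ(n) ≤ n! ≤ e^{1/(12n)} σ(n)` where `σ(n) = √(2πn) (n/e)^n`. Both bounds come from
telescoping stepwise bounds on `log (stirlingSeq n)`, which tends to `log √π`. Writing `n = m + k`,
the powers of `e` and of `m, k, n` in `σ(n) / (σ(m) σ(k)) · (m/n)^m (k/n)^k` cancel, leaving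
`√(n / (2π m k))`, and the error factor `e^{1/(12n) - 1/(12m+6) - 1/(12k+6)}` is at most `1`
since `12m + 6 ≤ 12n`.
-/

open Real Filter Topology Nat Stirling

theorem le_add_of_tendsto_of_sub_succ_le {a g : ℕ → ℝ} {L : ℝ} (ha : Tendsto a atTop (𝓝 L))
    (hg : Tendsto g atTop (𝓝 0)) (h : ∀ n, a n - a (n + 1) ≤ g n - g (n + 1)) (n : ℕ) :
    a n ≤ L + g n := by
  have hmono : Monotone (fun n ↦ a n - g n) :=
    monotone_nat_of_le_succ fun n ↦ by linarith [h n]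
  have := hmono.ge_of_tendsto (by simpa using ha.sub hg) n
  linarith

theorem tendsto_log_stirlingSeq_succ :
    Tendsto (fun n ↦ log (stirlingSeq (n + 1))) atTop (𝓝 (log √π)) :=
  ((tendsto_stirlingSeq_sqrt_pi.comp (tendsto_add_atTop_nat 1)).log (by positivity))

theorem tendsto_one_div_mul_add_nhds_zero (c d : ℝ) (hc : 0 < c) :
    Tendsto (fun n : ℕ ↦ 1 / (c * n + d)) atTop (𝓝 0) := by
  simp only [one_div]
  exact (tendsto_atTop_add_const_right _ d
    (tendsto_natCast_atTop_atTop.const_mul_atTop hc)).inv_tendsto_atTop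

theorem log_stirlingSeq_succ_le (n : ℕ) :
    log (stirlingSeq (n + 1)) ≤ log √π + 1 / (12 * (n + 1 : ℕ)) := by
  refine le_add_of_tendsto_of_sub_succ_le tendsto_log_stirlingSeq_succ
    (g := fun n : ℕ ↦ 1 / (12 * (n + 1 : ℕ))) ?_ (fun n ↦ ?_) n
  · simpa [mul_add] using tendsto_one_div_mul_add_nhds_zero 12 12 (by norm_num)
  · refine (log_stirlingSeq_sdiff_le (n + 1)).trans_eq ?_
    push_cast
    field_simp
    ring

theorem log_stirlingSeq_sdiff_ge (n : ℕ) :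
    1 / (3 * (2 * (n + 1 : ℕ) + 1) ^ 2) ≤
      log (stirlingSeq (n + 1)) - log (stirlingSeq (n + 2)) := by
  refine le_trans (le_of_eq ?_)
    (le_hasSum (log_stirlingSeq_sdiff_hasSum n) 0 fun _ _ ↦ by positivity)
  push_cast
  field_simp
  ring

theorem log_stirlingSeq_succ_ge (n : ℕ) :
    log √π + 1 / (12 * (n + 1 : ℕ) + 6) ≤ log (stirlingSeq (n + 1)) := by
  have hneg := le_add_of_tendsto_of_sub_succ_le tendsto_log_stirlingSeq_succ.neg
    (g := fun n : ℕ ↦ -(1 / (12 * (n + 1 : ℕ) + 6))) ?_ (fun n ↦ ?_) n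
  · linarith
  · have hlim := (tendsto_one_div_mul_add_nhds_zero 12 18 (by norm_num)).neg
    rw [neg_zero] at hlim
    convert hlim using 3
    push_cast
    ring
  · have h := log_stirlingSeq_sdiff_ge n
    have key : 1 / (12 * (n + 1 : ℕ) + 6 : ℝ) - 1 / (12 * (n + 1 + 1 : ℕ) + 6)
        ≤ 1 / (3 * (2 * (n + 1 : ℕ) + 1) ^ 2) := by
      push_cast
      rw [div_sub_div _ _ (by positivity) (by positivity),
        div_le_div_iff₀ (by positivity) (by positivity)]
      nlinarith
    linarith

noncomputable def stirlingApprox (n : ℕ) : ℝ := √(2 * π * n) * (n / exp 1) ^ n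

theorem stirlingApprox_pos {n : ℕ} (hn : n ≠ 0) : 0 < stirlingApprox n := by
  unfold stirlingApprox
  have : (0 : ℝ) < n := by positivity
  positivity

theorem factorial_eq_stirlingSeq_mul {n : ℕ} (hn : n ≠ 0) :
    (n ! : ℝ) = stirlingSeq n / √π * stirlingApprox n := by
  rw [stirlingSeq, stirlingApprox, show 2 * π * n = π * (2 * n) by ring, sqrt_mul pi_pos.le]
  field_simp

theorem factorial_le_exp_mul_stirlingApprox {n : ℕ} (hn : n ≠ 0) :
    (n ! : ℝ) ≤ exp (1 / (12 * n)) * stirlingApprox n := by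
  obtain ⟨n, rfl⟩ := exists_eq_add_one_of_ne_zero hn
  rw [factorial_eq_stirlingSeq_mul hn]
  gcongr
  · exact (stirlingApprox_pos hn).le
  rw [div_le_iff₀ (by positivity)]
  calc stirlingSeq (n + 1) ≤ exp (log √π + 1 / (12 * (n + 1 : ℕ))) :=
        (log_le_iff_le_exp (stirlingSeq'_pos n)).1 (log_stirlingSeq_succ_le n)
    _ = _ := by rw [exp_add, exp_log (by positivity), mul_comm]

theorem exp_mul_stirlingApprox_le_factorial {n : ℕ} (hn : n ≠ 0) :
    exp (1 / (12 * n + 6)) * stirlingApprox n ≤ n ! := by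
  obtain ⟨n, rfl⟩ := exists_eq_add_one_of_ne_zero hn
  rw [factorial_eq_stirlingSeq_mul hn]
  gcongr
  · exact (stirlingApprox_pos hn).le
  rw [le_div_iff₀ (by positivity)]
  calc exp (1 / (12 * (n + 1 : ℕ) + 6)) * √π = exp (log √π + 1 / (12 * (n + 1 : ℕ) + 6)) := by
        rw [exp_add, exp_log (by positivity), mul_comm]
    _ ≤ stirlingSeq (n + 1) :=
        (le_log_iff_exp_le (stirlingSeq'_pos n)).1 (log_stirlingSeq_succ_ge n)

theorem add_factorial_div_le {m k : ℕ} (hm : m ≠ 0) (hk : k ≠ 0) :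
    ((m + k)! : ℝ) / (m ! * k !) ≤
      stirlingApprox (m + k) / (stirlingApprox m * stirlingApprox k) := by
  have hmk : m + k ≠ 0 := by omega
  have hσm := stirlingApprox_pos hm
  have hσk := stirlingApprox_pos hk
  have hσ : 0 < stirlingApprox (m + k) * (stirlingApprox m * stirlingApprox k) :=
    mul_pos (stirlingApprox_pos hmk) (mul_pos hσm hσk)
  have hexp : exp (1 / (12 * (m + k : ℕ))) ≤ exp (1 / (12 * m + 6)) * exp (1 / (12 * k + 6)) := by
    rw [← exp_add, exp_le_exp]
    have : 1 / (12 * (m + k : ℕ) : ℝ) ≤ 1 / (12 * m + 6) := by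
      have : (1 : ℝ) ≤ k := by exact_mod_cast one_le_iff_ne_zero.2 hk
      gcongr
      push_cast
      linarith
    have : (0 : ℝ) ≤ 1 / (12 * k + 6) := by positivity
    linarith
  rw [div_le_div_iff₀ (by positivity) (mul_pos hσm hσk)]
  calc ((m + k)! : ℝ) * (stirlingApprox m * stirlingApprox k)
      ≤ exp (1 / (12 * (m + k : ℕ))) * stirlingApprox (m + k) *
          (stirlingApprox m * stirlingApprox k) :=
        mul_le_mul_of_nonneg_right (factorial_le_exp_mul_stirlingApprox hmk)
          (mul_pos hσm hσk).le
    _ ≤ exp (1 / (12 * m + 6)) * exp (1 / (12 * k + 6)) *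
          (stirlingApprox (m + k) * (stirlingApprox m * stirlingApprox k)) := by
        rw [mul_assoc]
        exact mul_le_mul_of_nonneg_right hexp hσ.le
    _ = stirlingApprox (m + k) * ((exp (1 / (12 * m + 6)) * stirlingApprox m) *
          (exp (1 / (12 * k + 6)) * stirlingApprox k)) := by ring
    _ ≤ stirlingApprox (m + k) * (m ! * k !) :=
        mul_le_mul_of_nonneg_left (mul_le_mul (exp_mul_stirlingApprox_le_factorial hm)
          (exp_mul_stirlingApprox_le_factorial hk) (mul_pos (exp_pos _) hσk).le (by positivity))
          (stirlingApprox_pos hmk).le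

theorem stirlingApprox_div_mul_pow_mul_pow {m k : ℕ} (hm : m ≠ 0) (hk : k ≠ 0) :
    stirlingApprox (m + k) / (stirlingApprox m * stirlingApprox k) *
        ((m : ℝ) / (m + k : ℕ)) ^ m * ((k : ℝ) / (m + k : ℕ)) ^ k =
      1 / √(2 * π) * √((m + k : ℕ) / (m * k)) := by
  have hm' : (0 : ℝ) < m := by positivity
  have hk' : (0 : ℝ) < k := by positivity
  simp only [stirlingApprox, cast_add, div_pow, pow_add, sqrt_mul zero_le_two,
    sqrt_mul (mul_nonneg zero_le_two pi_pos.le), sqrt_div (add_pos hm' hk').le, sqrt_mul hm'.le]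
  field_simp

theorem add_choose_mul_pow_mul_pow_le {m k : ℕ} (hm : m ≠ 0) (hk : k ≠ 0) :
    ((m + k).choose m : ℝ) * ((m : ℝ) / (m + k : ℕ)) ^ m * ((k : ℝ) / (m + k : ℕ)) ^ k ≤
      1 / √(2 * π) * √((m + k : ℕ) / (m * k)) := by
  rw [cast_add_choose, ← stirlingApprox_div_mul_pow_mul_pow hm hk]
  have := add_factorial_div_le hm hk
  gcongr

/-- For m = 1,…,n-1: P(S_n(m/n)=m) ≤ (1/√(2π))·√(n/(m(n-m))). -/
theorem binomial_mode_bound (n m : ℕ) (hm1 : 1 ≤ m) (hmn : m ≤ n - 1) :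
    (n.choose m : ℝ) * ((m : ℝ) / n) ^ m * (1 - (m : ℝ) / n) ^ (n - m)
      ≤ (1 / Real.sqrt (2 * Real.pi)) * Real.sqrt ((n : ℝ) / (m * ((n : ℝ) - m))) := by
  obtain ⟨k, rfl⟩ : ∃ k, n = m + k := ⟨n - m, by omega⟩
  have hk : k ≠ 0 := by omega
  have hmk : ((m + k : ℕ) : ℝ) ≠ 0 := by positivity
  have hsub : ((m + k : ℕ) : ℝ) - m = k := by push_cast; ring
  have hcompl : 1 - (m : ℝ) / (m + k : ℕ) = k / (m + k : ℕ) := by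
    rw [← hsub, sub_div, div_self hmk]
  rw [hcompl, hsub, Nat.add_sub_cancel_left]
  exact add_choose_mul_pow_mul_pow_le (by omega) hk
end

section
/- Let m ∈ ℕ and let β_m have density m(1-θ)^{m-1} on [0,1]. For every 0 ≤ r ≤ 1: E[(1-rβ_m)^{-m/2}] ≤ 1 + (m/(2(m+1)))r + (m/(4(m+1)))r² + ((m+4)/(4(m+1)))r³. -/
/-!
The function `(1 - x)^(-a)` is the binomial series `∑ₙ C(a + n - 1, n) xⁿ`, whose
coefficients are nonnegative for `a ≥ 0`. Hence its Taylor remainder `R` of order three at `0`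
is a power series starting at `x³` with nonnegative coefficients, so `R (r θ) ≤ r³ R θ` for
`0 ≤ r ≤ 1`. With `a = m/2`, integrating
`(1 - rθ)^(-a) ≤ 1 + a r θ + a(a+1)/2 (rθ)² + r³ R θ` against the `beta(1, m)` density only
involves `E[β]`, `E[β²]` and `E[(1 - β)^(-a)] = 2`.
-/

open Set MeasureTheory

theorem Ring.choose_add_natCast_sub_one_nonneg {a : ℝ} (ha : 0 ≤ a) (n : ℕ) :
    0 ≤ Ring.choose (a + n - 1) n := by
  rw [Ring.choose_eq_smul, ← Polynomial.aeval_eq_smeval, Polynomial.aeval_def,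
    Polynomial.eval₂_eq_eval_map, descPochhammer_map]
  exact smul_nonneg (by positivity) (descPochhammer_nonneg (by linarith))

theorem hasSum_choose_mul_pow_one_div_one_sub_rpow (a : ℝ) {x : ℝ} (hx : |x| < 1) :
    HasSum (fun n : ℕ => Ring.choose (a + n - 1) n * x ^ n) (1 / (1 - x) ^ a) := by
  have := (Real.one_div_one_sub_rpow_hasFPowerSeriesOnBall_zero a).hasSum (y := x)
    (by simpa [enorm_eq_nnnorm, ← NNReal.coe_lt_one] using hx)
  simpa [FormalMultilinearSeries.ofScalars_apply_eq, mul_comm] using this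

theorem hasSum_choose_mul_pow_add_three (a : ℝ) {x : ℝ} (hx : |x| < 1) :
    HasSum (fun n : ℕ => Ring.choose (a + (n + 3 : ℕ) - 1) (n + 3) * x ^ (n + 3))
      (1 / (1 - x) ^ a - (1 + a * x + a * (a + 1) / 2 * x ^ 2)) := by
  have hc2 : Ring.choose (a + (2 : ℕ) - 1) 2 = a * (a + 1) / 2 := by
    simp [Ring.choose_eq_smul, descPochhammer_succ_right, Polynomial.smeval_mul,
      Polynomial.smeval_X, Polynomial.smeval_sub]
    ring
  have hsum : ∑ i ∈ Finset.range 3, Ring.choose (a + i - 1) i * x ^ i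
      = 1 + a * x + a * (a + 1) / 2 * x ^ 2 := by
    simp only [Finset.sum_range_succ, Finset.sum_range_zero, hc2]
    simp
  rw [← hsum]
  exact (hasSum_nat_add_iff' 3).mpr (hasSum_choose_mul_pow_one_div_one_sub_rpow a hx)

theorem one_div_one_sub_rpow_sub_quadratic_le {a t x : ℝ} (ha : 0 ≤ a) (ht0 : 0 ≤ t)
    (ht1 : t ≤ 1) (hx0 : 0 ≤ x) (hx1 : x < 1) :
    1 / (1 - t * x) ^ a - (1 + a * (t * x) + a * (a + 1) / 2 * (t * x) ^ 2)
      ≤ t ^ 3 * (1 / (1 - x) ^ a - (1 + a * x + a * (a + 1) / 2 * x ^ 2)) := by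
  have hx : |x| < 1 := abs_lt.2 ⟨by linarith, hx1⟩
  have htx : |t * x| < 1 := by
    rw [abs_mul, abs_of_nonneg ht0]
    exact (mul_le_of_le_one_left (abs_nonneg x) ht1).trans_lt hx
  refine hasSum_le (fun n => ?_) (hasSum_choose_mul_pow_add_three a htx)
    ((hasSum_choose_mul_pow_add_three a hx).mul_left (t ^ 3))
  have hc := Ring.choose_add_natCast_sub_one_nonneg ha (n + 3)
  calc Ring.choose (a + (n + 3 : ℕ) - 1) (n + 3) * (t * x) ^ (n + 3)
      = t ^ n * (t ^ 3 * (Ring.choose (a + (n + 3 : ℕ) - 1) (n + 3) * x ^ (n + 3))) := by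
        ring
    _ ≤ t ^ 3 * (Ring.choose (a + (n + 3 : ℕ) - 1) (n + 3) * x ^ (n + 3)) :=
      mul_le_of_le_one_left (by positivity) (pow_le_one₀ ht0 ht1)

theorem intervalIntegral.integral_mono_on_Ioo_of_nonneg {f g : ℝ → ℝ} {a b : ℝ}
    (hab : a ≤ b) (hg : IntervalIntegrable g volume a b) (hf : ∀ x ∈ Ioo a b, 0 ≤ f x)
    (hfg : ∀ x ∈ Ioo a b, f x ≤ g x) :
    ∫ x in a..b, f x ≤ ∫ x in a..b, g x := by
  simp only [intervalIntegral.integral_of_le hab, integral_Ioc_eq_integral_Ioo]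
  exact integral_mono_of_nonneg (ae_restrict_of_forall_mem measurableSet_Ioo hf)
    (hg.1.mono_set Ioo_subset_Ioc_self) (ae_restrict_of_forall_mem measurableSet_Ioo hfg)

theorem integral_one_sub_pow (n : ℕ) : ∫ θ in (0:ℝ)..1, (1 - θ) ^ n = 1 / (n + 1) := by
  simp [intervalIntegral.integral_comp_sub_left (fun u : ℝ => u ^ n) 1, integral_pow]

theorem intervalIntegrable_one_sub_rpow {p : ℝ} (hp : -1 < p) :
    IntervalIntegrable (fun θ : ℝ => (1 - θ) ^ p) volume 0 1 := by
  simpa using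
    ((intervalIntegral.intervalIntegrable_rpow' hp (a := 0) (b := 1)).comp_sub_left 1).symm

theorem integral_one_sub_rpow {p : ℝ} (hp : -1 < p) :
    ∫ θ in (0:ℝ)..1, (1 - θ) ^ p = 1 / (p + 1) := by
  rw [intervalIntegral.integral_comp_sub_left (fun u : ℝ => u ^ p) 1]
  simp [integral_rpow (Or.inl hp), Real.zero_rpow (by linarith : p + 1 ≠ 0)]

/-- The density of `β_m`, the `beta(1, m)` distribution, on `[0, 1]`. -/
def betaOneDensity (m : ℕ) (θ : ℝ) : ℝ := m * (1 - θ) ^ (m - 1)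

namespace betaOneDensity

variable {m : ℕ}

@[fun_prop]
theorem continuous : Continuous (betaOneDensity m) := by
  unfold betaOneDensity
  fun_prop

theorem nonneg {θ : ℝ} (hθ : θ ≤ 1) : 0 ≤ betaOneDensity m θ :=
  mul_nonneg (Nat.cast_nonneg m) (pow_nonneg (sub_nonneg.2 hθ) _)

theorem integral (hm : 0 < m) : ∫ θ in (0:ℝ)..1, betaOneDensity m θ = 1 := by
  obtain ⟨k, rfl⟩ : ∃ k, m = k + 1 := ⟨m - 1, by omega⟩
  simp only [betaOneDensity]
  rw [intervalIntegral.integral_const_mul, Nat.add_sub_cancel, integral_one_sub_pow]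
  push_cast
  field_simp

theorem integral_mul_id (hm : 0 < m) :
    ∫ θ in (0:ℝ)..1, betaOneDensity m θ * θ = 1 / ((m : ℝ) + 1) := by
  obtain ⟨k, rfl⟩ : ∃ k, m = k + 1 := ⟨m - 1, by omega⟩
  have expand : ∀ θ : ℝ, betaOneDensity (k + 1) θ * θ
      = ((k : ℝ) + 1) * (1 - θ) ^ k - ((k : ℝ) + 1) * (1 - θ) ^ (k + 1) := by
    intro θ; simp [betaOneDensity]; ring
  simp only [expand]
  rw [intervalIntegral.integral_sub (Continuous.intervalIntegrable (by fun_prop) _ _)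
      (Continuous.intervalIntegrable (by fun_prop) _ _),
    intervalIntegral.integral_const_mul, intervalIntegral.integral_const_mul,
    integral_one_sub_pow, integral_one_sub_pow]
  push_cast
  field_simp
  ring

theorem integral_mul_sq (hm : 0 < m) :
    ∫ θ in (0:ℝ)..1, betaOneDensity m θ * θ ^ 2 = 2 / (((m : ℝ) + 1) * (m + 2)) := by
  obtain ⟨k, rfl⟩ : ∃ k, m = k + 1 := ⟨m - 1, by omega⟩
  have expand : ∀ θ : ℝ, betaOneDensity (k + 1) θ * θ ^ 2
      = ((k : ℝ) + 1) * (1 - θ) ^ k - 2 * ((k : ℝ) + 1) * (1 - θ) ^ (k + 1)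
        + ((k : ℝ) + 1) * (1 - θ) ^ (k + 2) := by
    intro θ; simp [betaOneDensity]; ring
  simp only [expand]
  rw [intervalIntegral.integral_add (Continuous.intervalIntegrable (by fun_prop) _ _)
      (Continuous.intervalIntegrable (by fun_prop) _ _),
    intervalIntegral.integral_sub (Continuous.intervalIntegrable (by fun_prop) _ _)
      (Continuous.intervalIntegrable (by fun_prop) _ _),
    intervalIntegral.integral_const_mul, intervalIntegral.integral_const_mul,
    intervalIntegral.integral_const_mul,
    integral_one_sub_pow, integral_one_sub_pow, integral_one_sub_pow]
  push_cast
  field_simp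
  ring

theorem mul_one_div_one_sub_rpow_eqOn (hm : 0 < m) (a : ℝ) :
    EqOn (fun θ : ℝ => betaOneDensity m θ * (1 / (1 - θ) ^ a))
      (fun θ => m * (1 - θ) ^ ((m : ℝ) - 1 - a)) (Ioo 0 1) := by
  intro θ hθ
  have h1θ : 0 < 1 - θ := sub_pos.2 hθ.2
  simp only [betaOneDensity]
  rw [Real.rpow_sub h1θ, ← Real.rpow_natCast, Nat.cast_sub hm, Nat.cast_one]
  ring

theorem intervalIntegrable_mul_one_div_one_sub_rpow (hm : 0 < m) {a : ℝ} (ha : a < m) :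
    IntervalIntegrable (fun θ : ℝ => betaOneDensity m θ * (1 / (1 - θ) ^ a)) volume 0 1 := by
  refine ((intervalIntegrable_one_sub_rpow (p := m - 1 - a) (by linarith)).const_mul
    (m : ℝ)).congr_uIoo ?_
  rw [uIoo_of_le zero_le_one]
  exact (mul_one_div_one_sub_rpow_eqOn hm a).symm

theorem integral_mul_one_div_one_sub_rpow (hm : 0 < m) {a : ℝ} (ha : a < m) :
    ∫ θ in (0:ℝ)..1, betaOneDensity m θ * (1 / (1 - θ) ^ a) = m / (m - a) := by
  rw [intervalIntegral.integral_congr_Ioo_of_le zero_le_one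
      (mul_one_div_one_sub_rpow_eqOn hm a),
    intervalIntegral.integral_const_mul, integral_one_sub_rpow (by linarith)]
  ring_nf

theorem intervalIntegrable_mul_quadratic_add_rpow (hm : 0 < m) {a : ℝ} (ha : a < m)
    (c₀ c₁ c₂ c₃ : ℝ) :
    IntervalIntegrable (fun θ : ℝ => betaOneDensity m θ
      * (c₀ + c₁ * θ + c₂ * θ ^ 2 + c₃ * (1 / (1 - θ) ^ a))) volume 0 1 := by
  refine ((Continuous.intervalIntegrable (u := fun θ : ℝ => betaOneDensity m θ
      * (c₀ + c₁ * θ + c₂ * θ ^ 2)) (by fun_prop) 0 1).add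
    ((intervalIntegrable_mul_one_div_one_sub_rpow hm ha).const_mul c₃)).congr fun θ _ => ?_
  ring

theorem integral_mul_quadratic_add_rpow (hm : 0 < m) {a : ℝ} (ha : a < m)
    (c₀ c₁ c₂ c₃ : ℝ) :
    ∫ θ in (0:ℝ)..1,
        betaOneDensity m θ * (c₀ + c₁ * θ + c₂ * θ ^ 2 + c₃ * (1 / (1 - θ) ^ a))
      = c₀ + c₁ / (m + 1) + 2 * c₂ / ((m + 1) * (m + 2)) + c₃ * m / (m - a) := by
  have expand : ∀ θ : ℝ,
      betaOneDensity m θ * (c₀ + c₁ * θ + c₂ * θ ^ 2 + c₃ * (1 / (1 - θ) ^ a))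
        = c₀ * betaOneDensity m θ + c₁ * (betaOneDensity m θ * θ)
          + c₂ * (betaOneDensity m θ * θ ^ 2)
          + c₃ * (betaOneDensity m θ * (1 / (1 - θ) ^ a)) :=
    fun θ => by ring
  simp only [expand]
  rw [intervalIntegral.integral_add (Continuous.intervalIntegrable (by fun_prop) _ _)
      ((intervalIntegrable_mul_one_div_one_sub_rpow hm ha).const_mul c₃),
    intervalIntegral.integral_add (Continuous.intervalIntegrable (by fun_prop) _ _)
      (Continuous.intervalIntegrable (by fun_prop) _ _),
    intervalIntegral.integral_add (Continuous.intervalIntegrable (by fun_prop) _ _)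
      (Continuous.intervalIntegrable (by fun_prop) _ _),
    intervalIntegral.integral_const_mul c₀, intervalIntegral.integral_const_mul c₁,
    intervalIntegral.integral_const_mul c₂, intervalIntegral.integral_const_mul c₃,
    integral hm, integral_mul_id hm, integral_mul_sq hm, integral_mul_one_div_one_sub_rpow hm ha]
  ring

end betaOneDensity

/-- For m ∈ ℕ, m ≥ 1, β_m with density m(1-θ)^{m-1} on [0,1], and 0 ≤ r ≤ 1:
E[(1-rβ_m)^{-m/2}] ≤ 1 + (m/(2(m+1)))r + (m/(4(m+1)))r² + ((m+4)/(4(m+1)))r³. -/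
theorem beta_m_half_inverse_moment_bound (m : ℕ) (hm : 1 ≤ m) (r : ℝ)
    (hr0 : 0 ≤ r) (hr1 : r ≤ 1) :
    ∫ θ in (0:ℝ)..1, ((m : ℝ) * (1 - θ) ^ (m - 1)) / ((1 - r * θ) ^ ((m : ℝ) / 2))
      ≤ 1 + ((m : ℝ) / (2 * (m + 1))) * r + ((m : ℝ) / (4 * (m + 1))) * r ^ 2
        + (((m : ℝ) + 4) / (4 * (m + 1))) * r ^ 3 := by
  set a : ℝ := (m : ℝ) / 2 with ha
  have ham : a < m := by linarith [show (1 : ℝ) ≤ m by exact_mod_cast hm]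
  have hbound : ∀ θ ∈ Ioo (0:ℝ) 1, 1 / (1 - r * θ) ^ a
      ≤ (1 - r ^ 3) + a * (r - r ^ 3) * θ + a * (a + 1) / 2 * (r ^ 2 - r ^ 3) * θ ^ 2
        + r ^ 3 * (1 / (1 - θ) ^ a) := fun θ hθ => by
    linear_combination
      one_div_one_sub_rpow_sub_quadratic_le (a := a) (by positivity) hr0 hr1 hθ.1.le hθ.2
  calc _ ≤ ∫ θ in (0:ℝ)..1, betaOneDensity m θ * ((1 - r ^ 3) + a * (r - r ^ 3) * θ
          + a * (a + 1) / 2 * (r ^ 2 - r ^ 3) * θ ^ 2 + r ^ 3 * (1 / (1 - θ) ^ a)) := by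
        refine intervalIntegral.integral_mono_on_Ioo_of_nonneg zero_le_one
          (betaOneDensity.intervalIntegrable_mul_quadratic_add_rpow hm ham _ _ _ _)
          (fun θ hθ => div_nonneg (betaOneDensity.nonneg hθ.2.le) (Real.rpow_nonneg ?_ _))
          fun θ hθ => ?_
        · nlinarith [hθ.1, hθ.2]
        · rw [div_eq_mul_one_div]
          exact mul_le_mul_of_nonneg_left (hbound θ hθ) (betaOneDensity.nonneg hθ.2.le)
    _ = _ := betaOneDensity.integral_mul_quadratic_add_rpow hm ham _ _ _ _
    _ = _ := by
      rw [ha]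
      field_simp
      ring
end
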